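/- There exist positive constants C₁ and C₂ such that C₁(T* − t)^{1/α} ≤ |y(t)| ≤ C₂(T* − t)^{1/α} for all t ∈ [t₀, T*). -/

import Mathlib

/-!
Write `A = S⁻¹ D S` and `z = S y`. Then `z' = -H(y) D z + S f`, and by homogeneity and
compactness of the unit sphere `H y ≍ ‖y‖ ^ (-α) ≍ ‖z‖ ^ (-α)` and `⟪z, D z⟫ ≍ ‖z‖ ^ 2`.
Hence `(‖z‖ ^ α)' = α ‖z‖ ^ (α - 2) ⟪z, z'⟫` lies between two negative constants as soon as `z`
is small enough for the perturbation `⟪z, S f⟫ = O(‖z‖ ^ (2 - α + δ))` to be absorbed.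
Integrating up to `T*` gives `‖y t‖ ≍ ‖z t‖ ≍ (T* - t) ^ (1 / α)` on some `(t₁, T*)`, and on the
compact interval `[t₀, t₁]` both sides are continuous and positive, hence comparable.
-/

open Set Real Filter Topology MeasureTheory

noncomputable section

/-- The action of an `n × n` real matrix on `EuclideanSpace ℝ (Fin n)` by
matrix-vector multiplication. -/
def mulVecE {n : ℕ} (A : Matrix (Fin n) (Fin n) ℝ) (x : EuclideanSpace ℝ (Fin n)) :
    EuclideanSpace ℝ (Fin n) :=
  WithLp.toLp 2 (A.mulVec x)

open Asymptotics
open scoped RealInnerProductSpace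

theorem Asymptotics.IsTheta.comp_tendsto {α β E' F' : Type*} [Norm E'] [Norm F'] {f : α → E'}
    {g : α → F'} {l : Filter α} (h : f =Θ[l] g) {k : β → α} {l' : Filter β}
    (hk : Tendsto k l' l) : (f ∘ k) =Θ[l'] (g ∘ k) :=
  ⟨h.1.comp_tendsto hk, h.2.comp_tendsto hk⟩

theorem Asymptotics.IsTheta.principal_Ico_of_nhdsLT {E' F' : Type*} [NormedAddCommGroup E']
    [NormedAddCommGroup F'] {g : ℝ → E'} {w : ℝ → F'} {a b : ℝ}
    (hg : ContinuousOn g (Ico a b)) (hw : ContinuousOn w (Ico a b))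
    (hg0 : ∀ t ∈ Ico a b, g t ≠ 0) (hw0 : ∀ t ∈ Ico a b, w t ≠ 0)
    (h : g =Θ[𝓝[<] b] w) : g =Θ[𝓟 (Ico a b)] w := by
  obtain ⟨c₁, hc₁⟩ := h.1.bound
  obtain ⟨c₂, hc₂⟩ := h.2.bound
  obtain ⟨l, hl, hsub⟩ := mem_nhdsLT_iff_exists_Ioo_subset.mp (hc₁.and hc₂)
  have hnear : g =Θ[𝓟 (Ioo l b)] w :=
    ⟨isBigO_principal.mpr ⟨c₁, fun t ht => (hsub ht).1⟩,
      isBigO_principal.mpr ⟨c₂, fun t ht => (hsub ht).2⟩⟩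
  have hIcc : Icc a l ⊆ Ico a b := Icc_subset_Ico_right hl
  have hfar : g =Θ[𝓟 (Icc a l)] w :=
    ((hg.mono hIcc).isTheta_principal isCompact_Icc (c := (1 : ℝ)) (by simp)
      fun t ht => hg0 t (hIcc ht)).trans
    ((hw.mono hIcc).isTheta_principal isCompact_Icc (by simp) fun t ht => hw0 t (hIcc ht)).symm
  have hcover : Ico a b ⊆ Icc a l ∪ Ioo l b := fun t ht => by
    rcases le_or_gt t l with htl | htl
    exacts [Or.inl ⟨ht.1, htl⟩, Or.inr ⟨htl, ht.2⟩]
  have hunion := hfar.sup hnear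
  rw [sup_principal] at hunion
  exact hunion.mono (principal_mono.mpr hcover)

theorem exists_pos_mul_le_le_mul_of_isTheta_principal {α : Type*} {s : Set α} {g w : α → ℝ}
    (hg : ∀ x ∈ s, 0 ≤ g x) (hw : ∀ x ∈ s, 0 ≤ w x) (h : g =Θ[𝓟 s] w) :
    ∃ C₁ C₂ : ℝ, 0 < C₁ ∧ 0 < C₂ ∧ ∀ x ∈ s, C₁ * w x ≤ g x ∧ g x ≤ C₂ * w x := by
  obtain ⟨C₂, hC₂, hup⟩ := h.1.exists_pos
  obtain ⟨C₁, hC₁, hlo⟩ := h.2.exists_pos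
  refine ⟨C₁⁻¹, C₂, inv_pos.mpr hC₁, hC₂, fun x hx => ⟨?_, ?_⟩⟩
  · have h := isBigOWith_principal.mp hlo x hx
    rw [Real.norm_of_nonneg (hg x hx), Real.norm_of_nonneg (hw x hx)] at h
    rwa [inv_mul_le_iff₀ hC₁]
  · have h := isBigOWith_principal.mp hup x hx
    rwa [Real.norm_of_nonneg (hg x hx), Real.norm_of_nonneg (hw x hx)] at h

section Homogeneous

variable {F : Type*} [NormedAddCommGroup F] [NormedSpace ℝ F] {p : ℝ} {g : F → ℝ}

def IsPosHomogeneous (p : ℝ) (g : F → ℝ) : Prop :=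
  ∀ x : F, x ≠ 0 → ∀ s : ℝ, 0 < s → g (s • x) = s ^ p * g x

theorem IsPosHomogeneous.eq_rpow_norm_mul (hg : IsPosHomogeneous p g) {x : F} (hx : x ≠ 0) :
    g x = ‖x‖ ^ p * g (‖x‖⁻¹ • x) := by
  have hr : 0 < ‖x‖ := norm_pos_iff.mpr hx
  rw [← hg _ (smul_ne_zero (inv_ne_zero hr.ne') hx) _ hr, smul_inv_smul₀ hr.ne']

theorem IsPosHomogeneous.pos (hg : IsPosHomogeneous p g) (hpos : ∀ x : F, ‖x‖ = 1 → 0 < g x)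
    {x : F} (hx : x ≠ 0) : 0 < g x := by
  rw [hg.eq_rpow_norm_mul hx]
  exact mul_pos (Real.rpow_pos_of_pos (norm_pos_iff.mpr hx) p)
    (hpos _ (norm_smul_inv_norm (𝕜 := ℝ) hx))

theorem IsPosHomogeneous.isTheta_rpow_norm [ProperSpace F] (hg : IsPosHomogeneous p g)
    (hcont : ContinuousOn g (Metric.sphere 0 1)) (hpos : ∀ x : F, ‖x‖ = 1 → 0 < g x) :
    g =Θ[𝓟 {0}ᶜ] fun x => ‖x‖ ^ p := by
  have hsphere : g =Θ[𝓟 (Metric.sphere 0 1)] fun _ => (1 : ℝ) :=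
    hcont.isTheta_principal (isCompact_sphere 0 1) (by simp)
      fun x hx => (hpos x (by simpa using hx)).ne'
  have hnormalize : Tendsto (fun x : F => ‖x‖⁻¹ • x) (𝓟 {0}ᶜ) (𝓟 (Metric.sphere 0 1)) :=
    tendsto_principal_principal.mpr fun x hx => by
      simpa using norm_smul_inv_norm (𝕜 := ℝ) hx
  have h := (isTheta_refl (fun x : F => ‖x‖ ^ p) _).mul (hsphere.comp_tendsto hnormalize)
  simp only [Function.comp_apply, mul_one] at h
  have hdecomp : g =ᶠ[𝓟 {0}ᶜ] fun x => ‖x‖ ^ p * g (‖x‖⁻¹ • x) :=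
    eventually_principal.mpr fun x hx => hg.eq_rpow_norm_mul hx
  exact hdecomp.trans_isTheta h

end Homogeneous

theorem mul_sub_le_of_hasDerivAt_le_neg {ψ ψ' : ℝ → ℝ} {l T c : ℝ}
    (hψ : ∀ t ∈ Ioo l T, HasDerivAt ψ (ψ' t) t) (hψ' : ∀ t ∈ Ioo l T, ψ' t ≤ -c)
    (hlim : Tendsto ψ (𝓝[<] T) (𝓝 0)) {t : ℝ} (ht : t ∈ Ioo l T) :
    c * (T - t) ≤ ψ t := by
  have hdecay : ∀ s ∈ Ioo t T, ψ s - ψ t ≤ -c * (s - t) := fun s hs =>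
    (convex_Ioo l T).image_sub_le_mul_sub_of_deriv_le
      (fun x hx => (hψ x hx).continuousAt.continuousWithinAt)
      (fun x hx => (hψ x (interior_subset hx)).differentiableAt.differentiableWithinAt)
      (fun x hx => (hψ x (interior_subset hx)).deriv ▸ hψ' x (interior_subset hx))
      t ht s ⟨ht.1.trans hs.1, hs.2⟩ hs.1.le
  have hlim' : Tendsto (fun s => ψ s + c * (s - t)) (𝓝[<] T) (𝓝 (0 + c * (T - t))) :=
    hlim.add (((continuous_const.mul (continuous_id.sub continuous_const)).tendsto T).mono_left
      nhdsWithin_le_nhds)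
  have hev : ∀ᶠ s in 𝓝[<] T, ψ s + c * (s - t) ≤ ψ t := by
    filter_upwards [Ioo_mem_nhdsLT ht.2] with s hs
    linarith [hdecay s hs]
  simpa using le_of_tendsto hlim' hev

variable {E : Type*} [NormedAddCommGroup E] [InnerProductSpace ℝ E]

theorem HasDerivAt.norm_rpow {z : ℝ → E} {v : E} {t : ℝ} (hz : HasDerivAt z v t) (hz0 : z t ≠ 0)
    (p : ℝ) : HasDerivAt (fun s => ‖z s‖ ^ p) (p * ‖z t‖ ^ (p - 2) * ⟪z t, v⟫) t := by
  have hsq : ∀ x : E, (‖x‖ ^ 2) ^ (p / 2) = ‖x‖ ^ p := fun x => by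
    rw [← Real.rpow_natCast, ← Real.rpow_mul (norm_nonneg x)]
    ring_nf
  have h := hz.norm_sq.rpow_const (p := p / 2) (Or.inl (by positivity))
  simp only [hsq] at h
  convert h using 1
  rw [← Real.rpow_natCast, ← Real.rpow_mul (norm_nonneg _)]
  ring_nf

theorem eventually_mul_sub_le_norm_rpow_le {z v : ℝ → E} {α a b T : ℝ} (hα : 0 < α)
    (hz : ∀ᶠ t in 𝓝[<] T, HasDerivAt z (v t) t ∧ z t ≠ 0 ∧
      a * ‖z t‖ ^ (2 - α) ≤ -⟪z t, v t⟫ ∧ -⟪z t, v t⟫ ≤ b * ‖z t‖ ^ (2 - α))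
    (hlim : Tendsto z (𝓝[<] T) (𝓝 0)) :
    ∀ᶠ t in 𝓝[<] T, α * a * (T - t) ≤ ‖z t‖ ^ α ∧ ‖z t‖ ^ α ≤ α * b * (T - t) := by
  obtain ⟨l, hl, hsub⟩ := mem_nhdsLT_iff_exists_Ioo_subset.mp hz
  have hderiv : ∀ t ∈ Ioo l T,
      HasDerivAt (fun s => ‖z s‖ ^ α) (α * ‖z t‖ ^ (α - 2) * ⟪z t, v t⟫) t :=
    fun t ht => (hsub ht).1.norm_rpow (hsub ht).2.1 α
  have hcancel : ∀ t ∈ Ioo l T, ‖z t‖ ^ (α - 2) * ‖z t‖ ^ (2 - α) = 1 := fun t ht => by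
    rw [← Real.rpow_add (norm_pos_iff.mpr (hsub ht).2.1)]
    simp
  have hlim' : Tendsto (fun s => ‖z s‖ ^ α) (𝓝[<] T) (𝓝 0) :=
    (tendsto_norm_zero.comp hlim).rpow_const_nhds_zero hα
  have hpow : ∀ s ∈ Ioo l T, 0 < α * ‖z s‖ ^ (α - 2) := fun s hs =>
    mul_pos hα (Real.rpow_pos_of_pos (norm_pos_iff.mpr (hsub hs).2.1) _)
  filter_upwards [Ioo_mem_nhdsLT hl] with t ht
  constructor
  · refine mul_sub_le_of_hasDerivAt_le_neg hderiv (fun s hs => ?_) hlim' ht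
    have h := mul_le_mul_of_nonneg_left (hsub hs).2.2.1 (hpow s hs).le
    linear_combination h - α * a * hcancel s hs
  · have h := mul_sub_le_of_hasDerivAt_le_neg (ψ := fun s => -‖z s‖ ^ α) (c := -(α * b))
      (fun s hs => (hderiv s hs).fun_neg) (fun s hs => ?_) (by simpa using hlim'.neg) ht
    · linarith
    have h := mul_le_mul_of_nonneg_left (hsub hs).2.2.2 (hpow s hs).le
    linear_combination h + α * b * hcancel s hs

theorem inner_isLittleO_rpow_norm {z F : ℝ → E} {α δ T : ℝ} (hδ : 0 < δ)
    (hz0 : ∀ᶠ t in 𝓝[<] T, z t ≠ 0) (hlim : Tendsto z (𝓝[<] T) (𝓝 0))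
    (hF : F =O[𝓝[<] T] fun t => ‖z t‖ ^ (1 - α + δ)) :
    (fun t => ⟪z t, F t⟫) =o[𝓝[<] T] fun t => ‖z t‖ ^ (2 - α) := by
  have hsmall : (fun t => ‖z t‖ ^ δ) =o[𝓝[<] T] fun _ => (1 : ℝ) := by
    rw [isLittleO_one_iff]
    exact (tendsto_norm_zero.comp hlim).rpow_const_nhds_zero hδ
  have hsplit : (fun t => ‖z t‖ * ‖z t‖ ^ (1 - α + δ)) =ᶠ[𝓝[<] T]
      fun t => ‖z t‖ ^ δ * ‖z t‖ ^ (2 - α) := by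
    filter_upwards [hz0] with t ht
    have hr := norm_pos_iff.mpr ht
    rw [← Real.rpow_add hr, show δ + (2 - α) = 1 + (1 - α + δ) by ring,
      Real.rpow_add hr 1, Real.rpow_one]
  calc (fun t => ⟪z t, F t⟫)
      =O[𝓝[<] T] fun t => ‖z t‖ * ‖F t‖ :=
        .of_bound 1 (.of_forall fun t => by simpa using abs_real_inner_le_norm (z t) (F t))
    _ =O[𝓝[<] T] fun t => ‖z t‖ * ‖z t‖ ^ (1 - α + δ) := (isBigO_refl _ _).mul hF.norm_left
    _ =ᶠ[𝓝[<] T] fun t => ‖z t‖ ^ δ * ‖z t‖ ^ (2 - α) := hsplit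
    _ =o[𝓝[<] T] fun t => 1 * ‖z t‖ ^ (2 - α) := hsmall.mul_isBigO (isBigO_refl _ _)
    _ = fun t => ‖z t‖ ^ (2 - α) := by simp

theorem norm_rpow_isTheta_sub_of_hasDerivAt {z G F : ℝ → E} {α δ T : ℝ} (hα : 0 < α)
    (hδ : 0 < δ) (hderiv : ∀ᶠ t in 𝓝[<] T, HasDerivAt z (-G t + F t) t)
    (hGpos : ∀ᶠ t in 𝓝[<] T, 0 < ⟪z t, G t⟫)
    (hG : (fun t => ⟪z t, G t⟫) =Θ[𝓝[<] T] fun t => ‖z t‖ ^ (2 - α))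
    (hF : F =O[𝓝[<] T] fun t => ‖z t‖ ^ (1 - α + δ))
    (hlim : Tendsto z (𝓝[<] T) (𝓝 0)) :
    (fun t => ‖z t‖ ^ α) =Θ[𝓝[<] T] fun t => T - t := by
  have hz0 : ∀ᶠ t in 𝓝[<] T, z t ≠ 0 :=
    hGpos.mono fun t ht hz => by simp [hz] at ht
  obtain ⟨a', ha', hGa⟩ := hG.2.exists_pos
  obtain ⟨b, hb, hGb⟩ := hG.1.exists_pos
  set a := a'⁻¹
  have ha : 0 < a := inv_pos.mpr ha'
  have hFa := (inner_isLittleO_rpow_norm hδ hz0 hlim hF).def (half_pos ha)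
  have hinner : ∀ᶠ t in 𝓝[<] T, HasDerivAt z (-G t + F t) t ∧ z t ≠ 0 ∧
      a / 2 * ‖z t‖ ^ (2 - α) ≤ -⟪z t, -G t + F t⟫ ∧
      -⟪z t, -G t + F t⟫ ≤ (b + a / 2) * ‖z t‖ ^ (2 - α) := by
    filter_upwards [hderiv, hGpos, hz0, hGa.bound, hGb.bound, hFa] with t hd hpos hne h₁ h₂ h₃
    have hr : 0 ≤ ‖z t‖ ^ (2 - α) := by positivity
    rw [Real.norm_of_nonneg hr, Real.norm_of_nonneg hpos.le, ← inv_mul_le_iff₀ ha'] at h₁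
    rw [Real.norm_of_nonneg hr, Real.norm_of_nonneg hpos.le] at h₂
    rw [Real.norm_of_nonneg hr, Real.norm_eq_abs] at h₃
    have hsplit : -⟪z t, -G t + F t⟫ = ⟪z t, G t⟫ - ⟪z t, F t⟫ := by
      rw [inner_add_right, inner_neg_right]; ring
    refine ⟨hd, hne, ?_, ?_⟩ <;> rw [hsplit] <;> linarith [abs_le.mp h₃]
  have hbounds := eventually_mul_sub_le_norm_rpow_le hα hinner hlim
  refine ⟨.of_bound (α * (b + a / 2)) ?_, .of_bound (α * (a / 2))⁻¹ ?_⟩ <;>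
    filter_upwards [hbounds, self_mem_nhdsWithin] with t ht (htT : t < T)
  · rw [Real.norm_of_nonneg (by positivity), Real.norm_of_nonneg (by linarith)]
    exact ht.2
  · rw [Real.norm_of_nonneg (by linarith), Real.norm_of_nonneg (by positivity),
      le_inv_mul_iff₀ (by positivity)]
    exact ht.1

theorem norm_isTheta_sub_rpow_of_hasDerivAt_neg_smul [ProperSpace E] {α δ T : ℝ} (hα : 0 < α)
    (hδ : 0 < δ) {A : E →L[ℝ] E} (e : E ≃L[ℝ] E) (hA : ∀ x, x ≠ 0 → 0 < ⟪e x, e (A x)⟫)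
    {H : E → ℝ} (hHhom : IsPosHomogeneous (-α) H)
    (hHcont : ContinuousOn H (Metric.sphere 0 1)) (hHpos : ∀ x : E, ‖x‖ = 1 → 0 < H x)
    {y f : ℝ → E} (hyne : ∀ᶠ t in 𝓝[<] T, y t ≠ 0) (hylim : Tendsto y (𝓝[<] T) (𝓝 0))
    (hode : ∀ᶠ t in 𝓝[<] T, HasDerivAt y (-(H (y t)) • A (y t) + f t) t)
    (hf : f =O[𝓝[<] T] fun t => ‖y t‖ ^ (1 - α + δ)) :
    (fun t => ‖y t‖) =Θ[𝓝[<] T] fun t => (T - t) ^ (1 / α) := by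
  set z := fun t => e (y t)
  have hyz : (fun t => ‖y t‖) =Θ[𝓝[<] T] fun t => ‖z t‖ :=
    isTheta_norm_left.mpr (isTheta_norm_right.mpr ⟨e.isBigO_comp_rev y _, e.isBigO_comp y _⟩)
  have hyz_rpow : ∀ p : ℝ, (fun t => ‖y t‖ ^ p) =Θ[𝓝[<] T] fun t => ‖z t‖ ^ p := fun p =>
    hyz.rpow (.of_forall fun _ => norm_nonneg _) (.of_forall fun _ => norm_nonneg _)
  have hy0 : Tendsto y (𝓝[<] T) (𝓟 {0}ᶜ) := tendsto_principal.mpr hyne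
  have hq : IsPosHomogeneous 2 fun x => ⟪e x, e (A x)⟫ := fun x _ s _ => by
    simp only [map_smul, inner_smul_left, inner_smul_right, Real.rpow_two, conj_trivial]
    ring
  have hqΘ := hq.isTheta_rpow_norm (by fun_prop) fun x hx =>
    hA x (norm_ne_zero_iff.mp (hx ▸ one_ne_zero))
  have hHΘ := hHhom.isTheta_rpow_norm hHcont hHpos
  have hG : (fun t => ⟪z t, H (y t) • e (A (y t))⟫) =Θ[𝓝[<] T] fun t => ‖z t‖ ^ (2 - α) :=
    calc (fun t => ⟪z t, H (y t) • e (A (y t))⟫)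
        = fun t => H (y t) * ⟪e (y t), e (A (y t))⟫ := by simp only [z, inner_smul_right]
      _ =Θ[𝓝[<] T] fun t => ‖y t‖ ^ (-α) * ‖y t‖ ^ (2 : ℝ) :=
          (hHΘ.comp_tendsto hy0).mul (hqΘ.comp_tendsto hy0)
      _ =ᶠ[𝓝[<] T] fun t => ‖y t‖ ^ (2 - α) := hyne.mono fun t ht => by
          dsimp only
          rw [← Real.rpow_add (norm_pos_iff.mpr ht)]
          ring_nf
      _ =Θ[𝓝[<] T] fun t => ‖z t‖ ^ (2 - α) := hyz_rpow _
  have hzderiv : ∀ᶠ t in 𝓝[<] T, HasDerivAt z (-(H (y t) • e (A (y t))) + e (f t)) t := by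
    filter_upwards [hode] with t ht
    convert e.hasFDerivAt.comp_hasDerivAt t ht using 1
    · rfl
    · simp [neg_smul]
  have hGpos : ∀ᶠ t in 𝓝[<] T, 0 < ⟪z t, H (y t) • e (A (y t))⟫ := by
    filter_upwards [hyne] with t ht
    rw [inner_smul_right]
    exact mul_pos (hHhom.pos hHpos ht) (hA _ ht)
  have hF : (fun t => e (f t)) =O[𝓝[<] T] fun t => ‖z t‖ ^ (1 - α + δ) :=
    (e.isBigO_comp f _).trans (hf.trans_isTheta (hyz_rpow _))
  have hzlim : Tendsto z (𝓝[<] T) (𝓝 0) := by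
    have h := (e.continuous.tendsto 0).comp hylim
    rwa [map_zero] at h
  have hz := (norm_rpow_isTheta_sub_of_hasDerivAt hα hδ hzderiv hGpos hG hF hzlim).rpow
    (r := α⁻¹) (.of_forall fun _ => by positivity)
    ((eventually_mem_nhdsWithin (s := Iio T)).mono fun t ht => sub_nonneg.mpr (le_of_lt ht))
  simp only [Real.rpow_rpow_inv (norm_nonneg _) hα.ne'] at hz
  rw [one_div]
  exact hyz.trans hz

theorem Matrix.exists_continuousLinearEquiv_inner_toEuclideanCLM_pos {ι : Type*} [Fintype ι]
    [DecidableEq ι] {A S D : Matrix ι ι ℝ} (hS : IsUnit S) (hD : D.PosDef)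
    (hA : A = S⁻¹ * D * S) :
    ∃ e : EuclideanSpace ℝ ι ≃L[ℝ] EuclideanSpace ℝ ι,
      ∀ x, x ≠ 0 → 0 < ⟪e x, e (Matrix.toEuclideanCLM (𝕜 := ℝ) A x)⟫ := by
  set e := ContinuousLinearEquiv.ofUnit (hS.map (Matrix.toEuclideanCLM (𝕜 := ℝ))).unit
  have hSA : S * A = D * S := by
    rw [hA, ← mul_assoc, ← mul_assoc,
      Matrix.mul_nonsing_inv _ ((Matrix.isUnit_iff_isUnit_det S).mp hS), one_mul]
  refine ⟨e, fun x hx => ?_⟩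
  have hconj : e (Matrix.toEuclideanCLM (𝕜 := ℝ) A x) =
      Matrix.toEuclideanCLM (𝕜 := ℝ) D (e x) := by
    change (Matrix.toEuclideanCLM (𝕜 := ℝ) S * Matrix.toEuclideanCLM (𝕜 := ℝ) A) x =
      (Matrix.toEuclideanCLM (𝕜 := ℝ) D * Matrix.toEuclideanCLM (𝕜 := ℝ) S) x
    rw [← map_mul, hSA, map_mul]
  have hex : WithLp.ofLp (e x) ≠ 0 := by simpa using hx
  rw [hconj, Matrix.inner_toEuclideanCLM]
  simpa using hD.dotProduct_mulVec_pos hex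

theorem mulVecE_eq_toEuclideanCLM {n : ℕ} (A : Matrix (Fin n) (Fin n) ℝ)
    (x : EuclideanSpace ℝ (Fin n)) : mulVecE A x = Matrix.toEuclideanCLM (𝕜 := ℝ) A x :=
  rfl

theorem solution_two_sided_power_rate_general (n : ℕ)
    (α δ M t₀ T' : ℝ) (hα : 0 < α) (hδ : 0 < δ)
    (hT' : t₀ < T')
    (A : Matrix (Fin n) (Fin n) ℝ)
    (hA : ∃ S D : Matrix (Fin n) (Fin n) ℝ, IsUnit S ∧ D.IsDiag ∧
      (∀ i, 0 < D i i) ∧ A = S⁻¹ * D * S)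
    (H : EuclideanSpace ℝ (Fin n) → ℝ)
    (hHhom : ∀ x : EuclideanSpace ℝ (Fin n), x ≠ 0 → ∀ s : ℝ, 0 < s →
      H (s • x) = s ^ (-α) * H x)
    (hHpos : ∀ x : EuclideanSpace ℝ (Fin n), ‖x‖ = 1 → 0 < H x)
    (hHcont : ContinuousOn H (Metric.sphere (0 : EuclideanSpace ℝ (Fin n)) 1))
    (y f : ℝ → EuclideanSpace ℝ (Fin n))
    (hycont : ContinuousOn y (Ico t₀ T'))
    (hyne : ∀ t ∈ Ico t₀ T', y t ≠ 0)
    (hylim : Tendsto y (𝓝[<] T') (𝓝 0))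
    (hode : ∀ t ∈ Ioo t₀ T', HasDerivAt y (-(H (y t)) • mulVecE A (y t) + f t) t)
    (hfb : ∀ t ∈ Ico t₀ T', ‖f t‖ ≤ M * ‖y t‖ ^ (1 - α + δ))
    :
    ∃ C₁ C₂ : ℝ, 0 < C₁ ∧ 0 < C₂ ∧
      ∀ t ∈ Ico t₀ T',
        C₁ * (T' - t) ^ (1 / α) ≤ ‖y t‖ ∧ ‖y t‖ ≤ C₂ * (T' - t) ^ (1 / α) := by
  simp only [mulVecE_eq_toEuclideanCLM] at hode
  obtain ⟨S, D, hS, hDdiag, hDpos, hAeq⟩ := hA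
  obtain ⟨e, he⟩ := Matrix.exists_continuousLinearEquiv_inner_toEuclideanCLM_pos hS
    (hDdiag.diagonal_diag ▸ Matrix.posDef_diagonal_iff.mpr hDpos) hAeq
  have hnear : ∀ᶠ t in 𝓝[<] T', t ∈ Ico t₀ T' := Ico_mem_nhdsLT hT'
  have hnear' : ∀ᶠ t in 𝓝[<] T', t ∈ Ioo t₀ T' := Ioo_mem_nhdsLT hT'
  have hf : f =O[𝓝[<] T'] fun t => ‖y t‖ ^ (1 - α + δ) :=
    .of_bound M <| hnear.mono fun t ht => by
      rw [Real.norm_of_nonneg (by positivity)]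
      exact hfb t ht
  have hΘ := norm_isTheta_sub_rpow_of_hasDerivAt_neg_smul hα hδ e he hHhom hHcont hHpos
    (hnear.mono hyne) hylim (hnear'.mono hode) hf
  have hw : ContinuousOn (fun t => (T' - t) ^ (1 / α)) (Ico t₀ T') :=
    (continuousOn_const.sub continuousOn_id).rpow_const fun _ _ => Or.inr (by positivity)
  have hw0 : ∀ t ∈ Ico t₀ T', 0 < (T' - t) ^ (1 / α) := fun t ht =>
    Real.rpow_pos_of_pos (sub_pos.mpr ht.2) _
  exact exists_pos_mul_le_le_mul_of_isTheta_principal (fun _ _ => norm_nonneg _)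
    (fun t ht => (hw0 t ht).le) (hΘ.principal_Ico_of_nhdsLT hycont.norm hw
      (fun t ht => norm_ne_zero_iff.mpr (hyne t ht)) fun t ht => (hw0 t ht).ne')

theorem solution_two_sided_power_rate (n : ℕ) (hn : 1 ≤ n)
    (α δ M t₀ T' : ℝ) (hα : 0 < α) (hδ : 0 < δ) (hM : 0 < M)
    (ht₀ : 0 ≤ t₀) (hT' : t₀ < T')
    (A : Matrix (Fin n) (Fin n) ℝ)
    (hA : ∃ S D : Matrix (Fin n) (Fin n) ℝ, IsUnit S ∧ D.IsDiag ∧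
      (∀ i, 0 < D i i) ∧ A = S⁻¹ * D * S)
    (H : EuclideanSpace ℝ (Fin n) → ℝ)
    (hHhom : ∀ x : EuclideanSpace ℝ (Fin n), x ≠ 0 → ∀ s : ℝ, 0 < s →
      H (s • x) = s ^ (-α) * H x)
    (hHpos : ∀ x : EuclideanSpace ℝ (Fin n), ‖x‖ = 1 → 0 < H x)
    (hHcont : ContinuousOn H (Metric.sphere (0 : EuclideanSpace ℝ (Fin n)) 1))
    (y f : ℝ → EuclideanSpace ℝ (Fin n))
    (hycont : ContinuousOn y (Ico t₀ T'))
    (hyne : ∀ t ∈ Ico t₀ T', y t ≠ 0)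
    (hylim : Tendsto y (𝓝[<] T') (𝓝 0))
    (hode : ∀ t ∈ Ioo t₀ T', HasDerivAt y (-(H (y t)) • mulVecE A (y t) + f t) t)
    (hfcont : ContinuousOn f (Ico t₀ T'))
    (hfb : ∀ t ∈ Ico t₀ T', ‖f t‖ ≤ M * ‖y t‖ ^ (1 - α + δ))
    :
    ∃ C₁ C₂ : ℝ, 0 < C₁ ∧ 0 < C₂ ∧
      ∀ t ∈ Ico t₀ T',
        C₁ * (T' - t) ^ (1 / α) ≤ ‖y t‖ ∧ ‖y t‖ ≤ C₂ * (T' - t) ^ (1 / α) :=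
  solution_two_sided_power_rate_general n α δ M t₀ T' hα hδ hT' A hA H hHhom hHpos hHcont y f hycont
    hyne hylim hode hfb
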